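/- arXiv:2511.21196 — 9 statements merged into one kernel-verified Lean document; each statement's English description precedes it below -/
import Mathlib

section
/- Let μ₀ be a probability measure on (Θ, ℬ), ε > 0, and ν a probability measure satisfying the ε-inferential-privacy constraint: ν(B')/ν(B'') ≤ e^ε μ₀(B')/μ₀(B'') whenever μ₀(B'), μ₀(B'') > 0. Let g = dν/dμ₀ be the Radon–Nikodym derivative and let e^{ε̄} be the essential supremum of g with respect to μ₀. Then ε̄ ≤ ε and g(θ) ∈ [e^{ε̄ - ε}, e^{ε̄}] for μ₀-almost every θ. -/
/-!
Write `g = dν/dμ₀` and `c = e^ε`. For `a` below the essential supremum of `g`, the superlevel set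
`A = {a < g}` is not null and `a μ₀(A) ≤ ν(A)`. Comparing `A` with an arbitrary set `B` in the
privacy constraint gives `a μ₀(B) ≤ c ν(B)`, hence `ess sup g · μ₀(B) ≤ c ν(B)` for every
measurable `B`. With `B = Θ` this is `ess sup g ≤ c`; for general `B` it says that the density
`c g` of `c ν` dominates `ess sup g` almost everywhere.
-/

open MeasureTheory
open scoped ENNReal

namespace MeasureTheory

variable {α : Type*} [MeasurableSpace α]

/-- The constraint `ν(B') / ν(B'') ≤ c μ(B') / μ(B'')` for all `B', B''` of positive `μ`-measure,
written without division. -/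
def IsInferentiallyPrivate (μ ν : Measure α) (c : ℝ≥0∞) : Prop :=
  ∀ B' B'', MeasurableSet B' → MeasurableSet B'' → 0 < μ B' → 0 < μ B'' →
    ν B' * μ B'' ≤ c * (ν B'' * μ B')

lemma measure_setOf_lt_ne_zero_of_lt_essSup {β : Type*} [CompleteLinearOrder β] {μ : Measure α}
    {f : α → β} {a : β} (ha : a < essSup f μ) : μ {x | a < f x} ≠ 0 := by
  intro h0
  refine ha.not_ge (essSup_le_of_ae_le a ?_)
  rw [Filter.EventuallyLE, ae_iff]
  simpa only [not_le] using h0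

lemma Measure.mul_measure_le_of_le_rnDeriv {μ ν : Measure α} {a : ℝ≥0∞} {s : Set α}
    (h : ∀ x ∈ s, a ≤ ν.rnDeriv μ x) : a * μ s ≤ ν s :=
  calc a * μ s = ∫⁻ _ in s, a ∂μ := (setLIntegral_const s a).symm
    _ ≤ ∫⁻ x in s, ν.rnDeriv μ x ∂μ := setLIntegral_mono (Measure.measurable_rnDeriv ν μ) h
    _ ≤ ν s := Measure.setLIntegral_rnDeriv_le s

lemma IsInferentiallyPrivate.essSup_rnDeriv_mul_le {μ ν : Measure α} [IsFiniteMeasure μ]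
    {c : ℝ≥0∞} (h : IsInferentiallyPrivate μ ν c) {s : Set α} (hs : MeasurableSet s) :
    essSup (ν.rnDeriv μ) μ * μ s ≤ c * ν s := by
  rcases eq_or_ne (μ s) 0 with hs0 | hs0
  · simp [hs0]
  refine ENNReal.mul_le_of_forall_lt fun a ha b hb => ?_
  set A := {x | a < ν.rnDeriv μ x}
  have hA : μ A ≠ 0 := measure_setOf_lt_ne_zero_of_lt_essSup ha
  have hmA : MeasurableSet A := measurableSet_lt measurable_const (Measure.measurable_rnDeriv ν μ)
  have key : a * μ s * μ A ≤ c * ν s * μ A :=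
    calc a * μ s * μ A = a * μ A * μ s := by ring
      _ ≤ ν A * μ s := by
        gcongr
        exact Measure.mul_measure_le_of_le_rnDeriv fun x hx => le_of_lt hx
      _ ≤ c * (ν s * μ A) := h A s hmA hs (pos_iff_ne_zero.2 hA) (pos_iff_ne_zero.2 hs0)
      _ = c * ν s * μ A := by ring
  calc a * b ≤ a * μ s := by gcongr
    _ ≤ c * ν s := (ENNReal.mul_le_mul_iff_left hA (measure_ne_top μ A)).1 key

lemma Measure.ae_le_mul_rnDeriv {μ ν : Measure α} [SigmaFinite μ]
    [ν.HaveLebesgueDecomposition μ] (hac : ν ≪ μ) {a c : ℝ≥0∞}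
    (h : ∀ s, MeasurableSet s → a * μ s ≤ c * ν s) : ∀ᵐ x ∂μ, a ≤ c * ν.rnDeriv μ x :=
  ae_le_of_forall_setLIntegral_le_of_sigmaFinite measurable_const fun s hs _ => by
    rw [setLIntegral_const, lintegral_const_mul _ (Measure.measurable_rnDeriv ν μ),
      Measure.setLIntegral_rnDeriv' hac hs]
    exact h s hs

end MeasureTheory

theorem stmt_3_general {Θ : Type*} [MeasurableSpace Θ] (μ₀ ν : Measure Θ)
    [IsProbabilityMeasure μ₀] [IsProbabilityMeasure ν]
    (ε : ℝ) (hac : ν ≪ μ₀)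
    (h : ∀ B' B'', MeasurableSet B' → MeasurableSet B'' → 0 < μ₀ B' → 0 < μ₀ B'' →
      ν B' * μ₀ B'' ≤ ENNReal.ofReal (Real.exp ε) * (ν B'' * μ₀ B')) :
    essSup (ν.rnDeriv μ₀) μ₀ ≤ ENNReal.ofReal (Real.exp ε) ∧
    ∀ᵐ θ ∂μ₀,
      essSup (ν.rnDeriv μ₀) μ₀ ≤ ENNReal.ofReal (Real.exp ε) * ν.rnDeriv μ₀ θ ∧
      ν.rnDeriv μ₀ θ ≤ essSup (ν.rnDeriv μ₀) μ₀ := by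
  have hpriv : IsInferentiallyPrivate μ₀ ν (ENNReal.ofReal (Real.exp ε)) := h
  have hM : ∀ s, MeasurableSet s →
      essSup (ν.rnDeriv μ₀) μ₀ * μ₀ s ≤ ENNReal.ofReal (Real.exp ε) * ν s :=
    fun s hs => hpriv.essSup_rnDeriv_mul_le hs
  refine ⟨by simpa using hM Set.univ .univ, ?_⟩
  filter_upwards [Measure.ae_le_mul_rnDeriv hac hM, ENNReal.ae_le_essSup (ν.rnDeriv μ₀)]
    with θ hlower hupper
  exact ⟨hlower, hupper⟩

/-- Under the ε-inferential-privacy constraint, the density g = dν/dμ₀ satisfies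
ess sup g ≤ e^ε (i.e. ε̄ ≤ ε) and g ∈ [e^{ε̄-ε}, e^{ε̄}] μ₀-a.e., where e^{ε̄} = ess sup g. -/
theorem stmt_3 {Θ : Type*} [MeasurableSpace Θ] (μ₀ ν : Measure Θ)
    [IsProbabilityMeasure μ₀] [IsProbabilityMeasure ν]
    (ε : ℝ) (hε : 0 < ε) (hac : ν ≪ μ₀)
    (h : ∀ B' B'', MeasurableSet B' → MeasurableSet B'' → 0 < μ₀ B' → 0 < μ₀ B'' →
      ν B' * μ₀ B'' ≤ ENNReal.ofReal (Real.exp ε) * (ν B'' * μ₀ B')) :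
    essSup (ν.rnDeriv μ₀) μ₀ ≤ ENNReal.ofReal (Real.exp ε) ∧
    ∀ᵐ θ ∂μ₀,
      essSup (ν.rnDeriv μ₀) μ₀ ≤ ENNReal.ofReal (Real.exp ε) * ν.rnDeriv μ₀ θ ∧
      ν.rnDeriv μ₀ θ ≤ essSup (ν.rnDeriv μ₀) μ₀ :=
  stmt_3_general μ₀ ν ε hac h
end

section
/- Fix ε > 0, a probability measure μ₀ on (Θ, ℬ), and a measurable set E with μ₀(E) ∈ (0,1). Define ν(B) = (e^ε μ₀(B ∩ E) + μ₀(B \ E)) / (e^ε μ₀(E) + (1 − μ₀(E))) for all measurable B. Then ν is a probability measure and ν satisfies the ε-inferential-privacy constraint: for all measurable B', B'' with μ₀(B'), μ₀(B'') > 0, ν(B') μ₀(B'') ≤ e^ε ν(B'') μ₀(B'). -/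
open MeasureTheory Set
open scoped ENNReal

/-!
Write `T(B) = c μ(B ∩ E) + μ(B \ E)` with `c = e^ε ≥ 1`, so that `ν = T / T(Θ)`. Splitting `B`
along `E` gives `μ B ≤ T(B) ≤ c μ B`; the first bound shows `T(Θ) ≥ 1` (and the second that it is
finite), and the two bounds together give `T(B') μ(B'') ≤ c μ(B') μ(B'') ≤ c T(B'') μ(B')`.
-/

namespace MeasureTheory.Measure

variable {Θ : Type*} [MeasurableSpace Θ] (μ : Measure Θ) (c : ℝ≥0∞) (E : Set Θ)

noncomputable def tiltedMass (B : Set Θ) : ℝ≥0∞ := c * μ (B ∩ E) + μ (B \ E)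

variable {μ c E}

lemma le_tiltedMass (hc : 1 ≤ c) (hE : MeasurableSet E) (B : Set Θ) :
    μ B ≤ μ.tiltedMass c E B :=
  calc μ B = μ (B ∩ E) + μ (B \ E) := (measure_inter_add_sdiff B hE).symm
    _ ≤ c * μ (B ∩ E) + μ (B \ E) := by gcongr; exact le_mul_of_one_le_left' hc

lemma tiltedMass_le (hc : 1 ≤ c) (hE : MeasurableSet E) (B : Set Θ) :
    μ.tiltedMass c E B ≤ c * μ B :=
  calc c * μ (B ∩ E) + μ (B \ E) ≤ c * μ (B ∩ E) + c * μ (B \ E) := by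
        gcongr; exact le_mul_of_one_le_left' hc
    _ = c * μ B := by rw [← mul_add, measure_inter_add_sdiff B hE]

lemma tiltedMass_univ [IsProbabilityMeasure μ] (hE : MeasurableSet E) :
    μ.tiltedMass c E univ = c * μ E + (1 - μ E) := by
  rw [tiltedMass, univ_inter, ← compl_eq_univ_sdiff, prob_compl_eq_one_sub hE]

lemma tiltedMass_div_mul_le (hc : 1 ≤ c) (hE : MeasurableSet E) (D : ℝ≥0∞) (B' B'' : Set Θ) :
    μ.tiltedMass c E B' / D * μ B'' ≤ c * (μ.tiltedMass c E B'' / D * μ B') :=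
  calc μ.tiltedMass c E B' / D * μ B''
      ≤ c * μ B' / D * μ.tiltedMass c E B'' := by
        gcongr
        exacts [tiltedMass_le hc hE B', le_tiltedMass hc hE B'']
    _ = c * (μ.tiltedMass c E B'' / D * μ B') := by simp only [div_eq_mul_inv]; ring

end MeasureTheory.Measure

theorem stmt_5_general {Θ : Type*} [MeasurableSpace Θ] (μ₀ : Measure Θ) [IsProbabilityMeasure μ₀]
    (ε : ℝ) (hε : 0 < ε) (E : Set Θ) (hE : MeasurableSet E)
    (ν : Measure Θ)
    (hν : ∀ B, MeasurableSet B → ν B =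
      (ENNReal.ofReal (Real.exp ε) * μ₀ (B ∩ E) + μ₀ (B \ E)) /
        (ENNReal.ofReal (Real.exp ε) * μ₀ E + (1 - μ₀ E))) :
    IsProbabilityMeasure ν ∧
    ∀ B' B'', MeasurableSet B' → MeasurableSet B'' → 0 < μ₀ B' → 0 < μ₀ B'' →
      ν B' * μ₀ B'' ≤ ENNReal.ofReal (Real.exp ε) * (ν B'' * μ₀ B') := by
  set c := ENNReal.ofReal (Real.exp ε)
  have hc : 1 ≤ c := ENNReal.one_le_ofReal.mpr (Real.one_le_exp hε.le)
  have hν' : ∀ B, MeasurableSet B →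
      ν B = μ₀.tiltedMass c E B / μ₀.tiltedMass c E univ := fun B hB => by
    rw [hν B hB, Measure.tiltedMass_univ hE, Measure.tiltedMass]
  refine ⟨⟨?_⟩, fun B' B'' hB' hB'' _ _ => ?_⟩
  · have h_one_le : 1 ≤ μ₀.tiltedMass c E univ :=
      measure_univ (μ := μ₀) ▸ Measure.le_tiltedMass hc hE univ
    have h_ne_top : μ₀.tiltedMass c E univ ≠ ⊤ :=
      ne_top_of_le_ne_top (ENNReal.mul_ne_top ENNReal.ofReal_ne_top (measure_ne_top _ _))
        (Measure.tiltedMass_le hc hE univ)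
    rw [hν' univ MeasurableSet.univ]
    exact ENNReal.div_self (one_pos.trans_le h_one_le).ne' h_ne_top
  · rw [hν' B' hB', hν' B'' hB'']
    exact Measure.tiltedMass_div_mul_le hc hE _ B' B''

/-- The uniform-tilt posterior ν(B) = (e^ε μ₀(B∩E) + μ₀(B\E)) / (e^ε μ₀(E) + (1-μ₀(E)))
is a probability measure satisfying the ε-inferential-privacy constraint. -/
theorem stmt_5 {Θ : Type*} [MeasurableSpace Θ] (μ₀ : Measure Θ) [IsProbabilityMeasure μ₀]
    (ε : ℝ) (hε : 0 < ε) (E : Set Θ) (hE : MeasurableSet E)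
    (hE0 : 0 < μ₀ E) (hE1 : μ₀ E < 1)
    (ν : Measure Θ)
    (hν : ∀ B, MeasurableSet B → ν B =
      (ENNReal.ofReal (Real.exp ε) * μ₀ (B ∩ E) + μ₀ (B \ E)) /
        (ENNReal.ofReal (Real.exp ε) * μ₀ E + (1 - μ₀ E))) :
    IsProbabilityMeasure ν ∧
    ∀ B' B'', MeasurableSet B' → MeasurableSet B'' → 0 < μ₀ B' → 0 < μ₀ B'' →
      ν B' * μ₀ B'' ≤ ENNReal.ofReal (Real.exp ε) * (ν B'' * μ₀ B') :=
  stmt_5_general μ₀ ε hε E hE ν hν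
end

section
/- Let Ω be a finite set, Θ a finite set, and θ̃ : Ω → Θ a function. Let μ₀ be a probability measure on Ω with full support, and let γ = Σₙ γₙ δ_{νₙ} be a finitely supported Bayes-plausible distribution over posteriors on Θ (i.e., Σₙ γₙ νₙ = μ₀ ∘ θ̃⁻¹, γₙ > 0, Σₙ γₙ = 1). Suppose for each n we are given conditional probabilities μₙ(·|θ_j) on Ω, supported on θ̃⁻¹(θ_j), satisfying μ₀(ω|θ_j) = Σₙ γₙ νₙ(θ_j) μₙ(ω|θ_j) / (Σₙ γₙ νₙ(θ_j)) for all ω, j with Σₙ γₙ νₙ(θ_j) > 0. Define μₙ(ω) = νₙ(θ̃(ω)) μₙ(ω|θ̃(ω)). Then each μₙ is a probability measure on Ω, the pushforward of μₙ under θ̃ equals νₙ, and Σₙ γₙ μₙ = μ₀ (Bayes plausibility of the extension). -/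
/-!
Gluing the conditionals `μc n θ` along the fibres of `θ̃` with weights `ν n θ` gives a
probability whose fibre masses are the `ν n θ`, because each conditional lives on its own fibre
and has mass one. Bayes plausibility of the glued posteriors is checked pointwise: the fibre
mass of `μ₀` at `θ̃ ω` equals `∑ₙ γₙ νₙ(θ̃ ω)` and is positive since `μ₀` has full support, so the
consistency condition can be cleared of its common denominator.
-/

open Finset

namespace MinimumInformativeExtension

variable {Ω Θ R : Type*}

def extendPosterior [Mul R] (tθ : Ω → Θ) (ν : Θ → R) (μc : Θ → Ω → R) (ω : Ω) : R :=
  ν (tθ ω) * μc (tθ ω) ω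

lemma extendPosterior_nonneg [MulZeroClass R] [Preorder R] [PosMulMono R]
    (tθ : Ω → Θ) {ν : Θ → R} {μc : Θ → Ω → R} (hν : ∀ θ, 0 ≤ ν θ) (hμc : ∀ θ ω, 0 ≤ μc θ ω)
    (ω : Ω) : 0 ≤ extendPosterior tθ ν μc ω :=
  mul_nonneg (hν _) (hμc _ ω)

section CommSemiring

variable [Fintype Ω] [DecidableEq Θ] [CommSemiring R] (tθ : Ω → Θ) {ν : Θ → R} {μc : Θ → Ω → R}

lemma sum_fiber_eq_sum_of_support {θ : Θ} {c : Ω → R} (hsupp : ∀ ω, tθ ω ≠ θ → c ω = 0) :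
    ∑ ω ∈ univ.filter (fun ω => tθ ω = θ), c ω = ∑ ω, c ω :=
  sum_filter_of_ne fun ω _ hω => by_contra fun h => hω (hsupp ω h)

lemma sum_fiber_extendPosterior {θ : Θ} (hsupp : ∀ ω, tθ ω ≠ θ → μc θ ω = 0)
    (hone : ∑ ω, μc θ ω = 1) :
    ∑ ω ∈ univ.filter (fun ω => tθ ω = θ), extendPosterior tθ ν μc ω = ν θ := by
  calc ∑ ω ∈ univ.filter (fun ω => tθ ω = θ), extendPosterior tθ ν μc ω
      = ∑ ω ∈ univ.filter (fun ω => tθ ω = θ), ν θ * μc θ ω :=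
        sum_congr rfl fun ω hω => by rw [extendPosterior, (mem_filter.mp hω).2]
    _ = ν θ := by rw [← mul_sum, sum_fiber_eq_sum_of_support tθ hsupp, hone, mul_one]

lemma sum_extendPosterior [Fintype Θ] (hsupp : ∀ θ ω, tθ ω ≠ θ → μc θ ω = 0)
    (hone : ∀ θ, ∑ ω, μc θ ω = 1) :
    ∑ ω, extendPosterior tθ ν μc ω = ∑ θ, ν θ := by
  rw [← sum_fiberwise univ tθ]
  exact sum_congr rfl fun θ _ => sum_fiber_extendPosterior tθ (hsupp θ) (hone θ)

end CommSemiring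

end MinimumInformativeExtension

open MinimumInformativeExtension

theorem stmt_8_general {Ω Θ : Type*} [Fintype Ω] [Fintype Θ] [DecidableEq Θ]
    (tθ : Ω → Θ) (μ₀ : Ω → ℝ) (hμpos : ∀ ω, 0 < μ₀ ω)
    (N : ℕ) (γ : Fin N → ℝ) (ν : Fin N → Θ → ℝ)
    (hνnn : ∀ n θ, 0 ≤ ν n θ) (hνone : ∀ n, ∑ θ, ν n θ = 1)
    (hbayes : ∀ θj, ∑ n, γ n * ν n θj =
      ∑ ω ∈ Finset.univ.filter (fun ω => tθ ω = θj), μ₀ ω)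
    (μc : Fin N → Θ → Ω → ℝ)
    (hμcnn : ∀ n θj ω, 0 ≤ μc n θj ω)
    (hμcsupp : ∀ n θj ω, tθ ω ≠ θj → μc n θj ω = 0)
    (hμcone : ∀ n θj, ∑ ω, μc n θj ω = 1)
    (hconsist : ∀ θj, 0 < ∑ n, γ n * ν n θj → ∀ ω, tθ ω = θj →
      μ₀ ω / (∑ ω' ∈ Finset.univ.filter (fun ω' => tθ ω' = θj), μ₀ ω') =
      (∑ n, γ n * ν n θj * μc n θj ω) / (∑ n, γ n * ν n θj))
    (μn : Fin N → Ω → ℝ)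
    (hμn : ∀ n ω, μn n ω = ν n (tθ ω) * μc n (tθ ω) ω) :
    (∀ n, (∀ ω, 0 ≤ μn n ω) ∧ ∑ ω, μn n ω = 1) ∧
    (∀ n θj, ∑ ω ∈ Finset.univ.filter (fun ω => tθ ω = θj), μn n ω = ν n θj) ∧
    (∀ ω, ∑ n, γ n * μn n ω = μ₀ ω) := by
  obtain rfl : μn = fun n => extendPosterior tθ (ν n) (μc n) := funext₂ hμn
  refine ⟨fun n => ⟨extendPosterior_nonneg tθ (hνnn n) (hμcnn n),
      (sum_extendPosterior tθ (hμcsupp n) (hμcone n)).trans (hνone n)⟩,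
    fun n θ => sum_fiber_extendPosterior tθ (hμcsupp n θ) (hμcone n θ), fun ω => ?_⟩
  have hfiber_pos : 0 < ∑ n, γ n * ν n (tθ ω) := by
    rw [hbayes]
    exact sum_pos (fun ω' _ => hμpos ω') ⟨ω, mem_filter.mpr ⟨mem_univ ω, rfl⟩⟩
  have hmix := hconsist (tθ ω) hfiber_pos ω rfl
  rw [← hbayes, div_left_inj' hfiber_pos.ne'] at hmix
  rw [hmix]
  exact sum_congr rfl fun n _ => (mul_assoc _ _ _).symm

/-- The finite linear system (1)-(4) of the paper produces a valid minimum-informative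
extension: each μₙ is a probability on Ω, its pushforward under θ̃ is νₙ, and Σₙ γₙ μₙ = μ₀. -/
theorem stmt_8 {Ω Θ : Type*} [Fintype Ω] [Fintype Θ] [DecidableEq Θ]
    (tθ : Ω → Θ) (μ₀ : Ω → ℝ) (hμpos : ∀ ω, 0 < μ₀ ω) (hμone : ∑ ω, μ₀ ω = 1)
    (N : ℕ) (γ : Fin N → ℝ) (ν : Fin N → Θ → ℝ)
    (hγpos : ∀ n, 0 < γ n) (hγone : ∑ n, γ n = 1)
    (hνnn : ∀ n θ, 0 ≤ ν n θ) (hνone : ∀ n, ∑ θ, ν n θ = 1)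
    (hbayes : ∀ θj, ∑ n, γ n * ν n θj =
      ∑ ω ∈ Finset.univ.filter (fun ω => tθ ω = θj), μ₀ ω)
    (μc : Fin N → Θ → Ω → ℝ)
    (hμcnn : ∀ n θj ω, 0 ≤ μc n θj ω)
    (hμcsupp : ∀ n θj ω, tθ ω ≠ θj → μc n θj ω = 0)
    (hμcone : ∀ n θj, ∑ ω, μc n θj ω = 1)
    (hconsist : ∀ θj, 0 < ∑ n, γ n * ν n θj → ∀ ω, tθ ω = θj →
      μ₀ ω / (∑ ω' ∈ Finset.univ.filter (fun ω' => tθ ω' = θj), μ₀ ω') =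
      (∑ n, γ n * ν n θj * μc n θj ω) / (∑ n, γ n * ν n θj))
    (μn : Fin N → Ω → ℝ)
    (hμn : ∀ n ω, μn n ω = ν n (tθ ω) * μc n (tθ ω) ω) :
    (∀ n, (∀ ω, 0 ≤ μn n ω) ∧ ∑ ω, μn n ω = 1) ∧
    (∀ n θj, ∑ ω ∈ Finset.univ.filter (fun ω => tθ ω = θj), μn n ω = ν n θj) ∧
    (∀ ω, ∑ n, γ n * μn n ω = μ₀ ω) :=
  stmt_8_general tθ μ₀ hμpos N γ ν hνnn hνone hbayes μc hμcnn hμcsupp hμcone hconsist μn hμn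
end

section
/- Let Ω be a finite set, θ̃ : Ω → Θ a function to a finite set Θ, μ₀ a full-support prior on Ω, and let τ = Σₖ τₖ δ_{μₖ} be a finitely supported Bayes-plausible distribution over posteriors on Ω (Σₖ τₖ μₖ = μ₀). Suppose there exist two indices k ≠ k' with τₖ, τ_{k'} > 0 such that the pushforwards of μₖ and μ_{k'} under θ̃ are equal but μₖ ≠ μ_{k'}. Define τ' by merging these two atoms: replace δ_{μₖ} and δ_{μ_{k'}} by a single atom at μ* = (τₖ μₖ + τ_{k'} μ_{k'})/(τₖ + τ_{k'}) with weight τₖ + τ_{k'}. Then τ' is Bayes plausible, τ is a mean-preserving spread of τ' with τ ≠ τ', and the θ̃-marginal distributions over posteriors about Θ of τ and τ' coincide. -/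
/-!
The merged atom μ* is the barycenter of μₖ and μ_{k'} with weights proportional to τₖ and τ_{k'}.
It is a posterior because the simplex is convex, it has the common θ̃-marginal because the
pushforward along θ̃ is linear, and replacing the two atoms by it keeps the mean μ₀.
-/

open Finset

section Barycenter

variable {𝕜 E F : Type*} [Field 𝕜] [AddCommGroup E] [Module 𝕜 E] [AddCommGroup F] [Module 𝕜 F]

theorem div_smul_add_div_smul_eq_inv_smul {a b : 𝕜} (x y : E) :
    (a / (a + b)) • x + (b / (a + b)) • y = (a + b)⁻¹ • (a • x + b • y) := by
  rw [smul_add, smul_smul, smul_smul, div_eq_inv_mul, div_eq_inv_mul]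

theorem LinearMap.map_inv_smul_add_smul_of_map_eq (L : E →ₗ[𝕜] F) {a b : 𝕜} (hab : a + b ≠ 0)
    {x y : E} (hxy : L x = L y) : L ((a + b)⁻¹ • (a • x + b • y)) = L x := by
  rw [map_smul, map_add, map_smul, map_smul, ← hxy, ← add_smul, inv_smul_smul₀ hab]

end Barycenter

theorem Finset.sum_univ_eq_sum_erase_erase_add_add {ι M : Type*} [Fintype ι] [DecidableEq ι]
    [AddCommMonoid M] (f : ι → M) {k k' : ι} (hkk : k ≠ k') :
    ∑ i, f i = ∑ i ∈ (univ.erase k).erase k', f i + (f k + f k') := by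
  rw [← sum_erase_add _ _ (mem_univ k), ← sum_erase_add _ _ (mem_erase.2 ⟨hkk.symm, mem_univ k'⟩),
    add_assoc, add_comm (f k')]

def marginal {Ω Θ : Type*} [Fintype Ω] [DecidableEq Θ] (f : Ω → Θ) : (Ω → ℝ) →ₗ[ℝ] Θ → ℝ where
  toFun m j := ∑ ω ∈ univ.filter (fun ω => f ω = j), m ω
  map_add' m m' := by ext j; simp [sum_add_distrib]
  map_smul' c m := by ext j; simp [mul_sum]

open scoped Classical in
theorem stmt_9_general {Ω Θ : Type*} [Fintype Ω] [Fintype Θ]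
    (tθ : Ω → Θ) (μ₀ : Ω → ℝ)
    (K : ℕ) (t : Fin K → ℝ) (μ : Fin K → Ω → ℝ)
    (htpos : ∀ i, 0 < t i)
    (hprob : ∀ i, (∀ ω, 0 ≤ μ i ω) ∧ ∑ ω, μ i ω = 1)
    (hbayes : ∑ i, t i • μ i = μ₀)
    (k k' : Fin K) (hkk : k ≠ k')
    (push : (Ω → ℝ) → Θ → ℝ)
    (hpush : ∀ m j, push m j = ∑ ω ∈ Finset.univ.filter (fun ω => tθ ω = j), m ω)
    (hmarg : push (μ k) = push (μ k')) (hne : μ k ≠ μ k')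
    (μstar : Ω → ℝ)
    (hμstar : μstar = (t k + t k')⁻¹ • (t k • μ k + t k' • μ k')) :
    ((∀ ω, 0 ≤ μstar ω) ∧ ∑ ω, μstar ω = 1) ∧
    ((∑ i ∈ (Finset.univ.erase k).erase k', t i • μ i) + (t k + t k') • μstar = μ₀) ∧
    ((t k / (t k + t k')) • μ k + (t k' / (t k + t k')) • μ k' = μstar) ∧
    (μ k ≠ μstar ∨ μ k' ≠ μstar) ∧
    push μstar = push (μ k) ∧
    (∀ νq : Θ → ℝ,
      (∑ i, if push (μ i) = νq then t i else 0) =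
      (∑ i ∈ (Finset.univ.erase k).erase k', if push (μ i) = νq then t i else 0) +
      (if push μstar = νq then t k + t k' else 0)) := by
  have hpos : 0 < t k + t k' := add_pos (htpos k) (htpos k')
  have hconv : (t k / (t k + t k')) • μ k + (t k' / (t k + t k')) • μ k' = μstar := by
    rw [hμstar, div_smul_add_div_smul_eq_inv_smul]
  have hpush_eq : push = marginal tθ := funext fun m => funext (hpush m)
  have hpush_star : push μstar = push (μ k) := by
    rw [hμstar, hpush_eq]
    exact (marginal tθ).map_inv_smul_add_smul_of_map_eq hpos.ne' (hpush_eq ▸ hmarg)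
  refine ⟨?_, ?_, hconv, ?_, hpush_star, fun νq => ?_⟩
  · rw [← hconv]
    exact convex_iff_div.1 (convex_stdSimplex ℝ Ω) (hprob k) (hprob k') (htpos k).le
      (htpos k').le hpos
  · rw [hμstar, smul_inv_smul₀ hpos.ne', ← hbayes,
      sum_univ_eq_sum_erase_erase_add_add (fun i => t i • μ i) hkk]
  · exact not_and_or.1 fun h => hne (h.1.trans h.2.symm)
  · rw [sum_univ_eq_sum_erase_erase_add_add _ hkk, hpush_star, ← hmarg, ite_add_ite, add_zero]

open scoped Classical in
/-- Merging two atoms of a Bayes-plausible distribution over posteriors that share the same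
θ̃-marginal yields a Bayes-plausible distribution τ' of which τ is a strict mean-preserving
spread, with identical θ̃-marginal distributions over posteriors. -/
theorem stmt_9 {Ω Θ : Type*} [Fintype Ω] [Fintype Θ]
    (tθ : Ω → Θ) (μ₀ : Ω → ℝ)
    (K : ℕ) (t : Fin K → ℝ) (μ : Fin K → Ω → ℝ)
    (htpos : ∀ i, 0 < t i) (htone : ∑ i, t i = 1)
    (hprob : ∀ i, (∀ ω, 0 ≤ μ i ω) ∧ ∑ ω, μ i ω = 1)
    (hbayes : ∑ i, t i • μ i = μ₀)
    (k k' : Fin K) (hkk : k ≠ k')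
    (push : (Ω → ℝ) → Θ → ℝ)
    (hpush : ∀ m j, push m j = ∑ ω ∈ Finset.univ.filter (fun ω => tθ ω = j), m ω)
    (hmarg : push (μ k) = push (μ k')) (hne : μ k ≠ μ k')
    (μstar : Ω → ℝ)
    (hμstar : μstar = (t k + t k')⁻¹ • (t k • μ k + t k' • μ k')) :
    ((∀ ω, 0 ≤ μstar ω) ∧ ∑ ω, μstar ω = 1) ∧
    ((∑ i ∈ (Finset.univ.erase k).erase k', t i • μ i) + (t k + t k') • μstar = μ₀) ∧
    ((t k / (t k + t k')) • μ k + (t k' / (t k + t k')) • μ k' = μstar) ∧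
    (μ k ≠ μstar ∨ μ k' ≠ μstar) ∧
    push μstar = push (μ k) ∧
    (∀ νq : Θ → ℝ,
      (∑ i, if push (μ i) = νq then t i else 0) =
      (∑ i ∈ (Finset.univ.erase k).erase k', if push (μ i) = νq then t i else 0) +
      (if push μstar = νq then t k + t k' else 0)) :=
  stmt_9_general tθ μ₀ K t μ htpos hprob hbayes k k' hkk push hpush hmarg hne μstar hμstar
end

section
/- Let Ω, Θ be finite sets, θ̃ : Ω → Θ a function, and let τ, τ' be finitely supported Bayes-plausible distributions over Δ(Ω) such that τ is a mean-preserving spread of τ' via a Markov kernel K (each atom μ' of τ' is replaced by a distribution K(·|μ') over Δ(Ω) with barycenter μ'). Then the pushforward τ^θ of τ under μ ↦ μ∘θ̃⁻¹ is a mean-preserving spread of the pushforward τ'^θ of τ'. -/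
open Finset

/-!
Taking the θ̃-marginal is a linear map on signed measures over Ω, so it commutes with
barycenters. Hence the kernel `Kk` witnessing the spread over Ω also witnesses it after
pushing every posterior forward to Θ, and the mixing weights are unchanged.
-/

theorem sum_filter_fiber_sum_smul {ι Ω Θ R : Type*} [Fintype Ω] [DecidableEq Θ]
    [CommSemiring R] (f : Ω → Θ) (s : Finset ι) (c : ι → R) (m : ι → Ω → R) (t : Θ) :
    ∑ ω ∈ univ.filter (fun ω => f ω = t), (∑ j ∈ s, c j • m j) ω =
      ∑ j ∈ s, c j * ∑ ω ∈ univ.filter (fun ω => f ω = t), m j ω := by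
  simp only [Finset.sum_apply, Pi.smul_apply, smul_eq_mul, Finset.mul_sum]
  exact Finset.sum_comm

theorem stmt_10_general {Ω Θ : Type*} [Fintype Ω] [DecidableEq Θ]
    (tθ : Ω → Θ)
    (push : (Ω → ℝ) → Θ → ℝ)
    (hpush : ∀ m j, push m j = ∑ ω ∈ Finset.univ.filter (fun ω => tθ ω = j), m ω)
    (K' K : ℕ) (w' : Fin K' → ℝ) (μ' : Fin K' → Ω → ℝ)
    (w : Fin K → ℝ) (μ : Fin K → Ω → ℝ)
    (Kk : Fin K' → Fin K → ℝ)
    (hKnn : ∀ i j, 0 ≤ Kk i j) (hKone : ∀ i, ∑ j, Kk i j = 1)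
    (hbary : ∀ i, ∑ j, Kk i j • μ j = μ' i)
    (hmix : ∀ j, w j = ∑ i, w' i * Kk i j) :
    ∃ Q : Fin K' → Fin K → ℝ,
      (∀ i j, 0 ≤ Q i j) ∧ (∀ i, ∑ j, Q i j = 1) ∧
      (∀ i, ∑ j, Q i j • push (μ j) = push (μ' i)) ∧
      (∀ j, w j = ∑ i, w' i * Q i j) := by
  refine ⟨Kk, hKnn, hKone, fun i => ?_, hmix⟩
  funext t
  rw [← hbary i, hpush, sum_filter_fiber_sum_smul, Finset.sum_apply]
  simp only [Pi.smul_apply, smul_eq_mul, hpush]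

/-- If τ is a mean-preserving spread of τ' (over posteriors on Ω), then the induced
distributions over θ̃-marginal posteriors are ordered the same way: there is a
barycenter-preserving kernel witnessing the spread at the Θ-level. -/
theorem stmt_10 {Ω Θ : Type*} [Fintype Ω] [Fintype Θ] [DecidableEq Θ]
    (tθ : Ω → Θ)
    (push : (Ω → ℝ) → Θ → ℝ)
    (hpush : ∀ m j, push m j = ∑ ω ∈ Finset.univ.filter (fun ω => tθ ω = j), m ω)
    (K' K : ℕ) (w' : Fin K' → ℝ) (μ' : Fin K' → Ω → ℝ)
    (w : Fin K → ℝ) (μ : Fin K → Ω → ℝ)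
    (hw'nn : ∀ i, 0 ≤ w' i) (hw'one : ∑ i, w' i = 1)
    (Kk : Fin K' → Fin K → ℝ)
    (hKnn : ∀ i j, 0 ≤ Kk i j) (hKone : ∀ i, ∑ j, Kk i j = 1)
    (hbary : ∀ i, ∑ j, Kk i j • μ j = μ' i)
    (hmix : ∀ j, w j = ∑ i, w' i * Kk i j) :
    ∃ Q : Fin K' → Fin K → ℝ,
      (∀ i j, 0 ≤ Q i j) ∧ (∀ i, ∑ j, Q i j = 1) ∧
      (∀ i, ∑ j, Q i j • push (μ j) = push (μ' i)) ∧
      (∀ j, w j = ∑ i, w' i * Q i j) :=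
  stmt_10_general tθ push hpush K' K w' μ' w μ Kk hKnn hKone hbary hmix
end

section
/- Let τ' be a finitely supported probability distribution on ℝ^n (viewed as a distribution over posteriors), and suppose τ is obtained from τ' by a mean-preserving spread via kernel K, i.e., τ = Σ_{μ'} τ'(μ') K(·|μ') with ∫ μ K(dμ|μ') = μ' for each atom μ'. Let L : ℝ^n → ℝ^m be a linear map, let τ^L denote the pushforward of τ under L (and τ'^L that of τ'), and assume the map from supp(τ) to supp(τ^L) given by L is injective on supp(τ). If K is nondegenerate (there is an atom μ' with K(μ'|μ') < 1 and L∘supp K(·|μ') not a singleton), then τ^L is a strict mean-preserving spread of τ'^L, i.e., τ^L ≠ τ'^L. -/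
open Finset

open scoped Classical

/-- Variance identity: second moment minus square of mean equals expected squared deviation. -/
lemma gap_identity {K : ℕ} (p x : Fin K → ℝ) (h1 : ∑ j, p j = 1) :
    ∑ j, p j * (x j) ^ 2 - (∑ j, p j * x j) ^ 2
      = ∑ j, p j * (x j - ∑ j', p j' * x j') ^ 2 := by
  set mm := ∑ j, p j * x j with hm
  have h : ∑ j, p j * (x j - mm) ^ 2
      = ∑ j, (p j * (x j) ^ 2 - 2 * mm * (p j * x j) + mm ^ 2 * p j) := by
    apply Finset.sum_congr rfl; intro j _; ring
  rw [h, Finset.sum_add_distrib, Finset.sum_sub_distrib, ← Finset.mul_sum,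
    ← Finset.mul_sum, h1, ← hm]
  ring

/-- Grouping a sum over points into fibers of a map, weighted by a function of the image. -/
lemma fiber_sum {K : ℕ} {β : Type*} [DecidableEq β] (w : Fin K → ℝ) (f : Fin K → β)
    (S : Finset β) (hS : ∀ j, f j ∈ S) (g : β → ℝ) :
    ∑ j, w j * g (f j)
      = ∑ y ∈ S, (∑ j ∈ Finset.univ.filter (fun j => f j = y), w j) * g y := by
  rw [← Finset.sum_fiberwise_of_maps_to (fun j _ => hS j) (fun j => w j * g (f j))]
  apply Finset.sum_congr rfl
  intro y _
  rw [Finset.sum_mul]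
  apply Finset.sum_congr rfl
  intro j hj
  rw [Finset.mem_filter] at hj
  rw [hj.2]

open scoped Classical in
/-- If the linear marginalization map L is injective on the support of τ, then any
nondegenerate mean-preserving spread from τ' to τ induces a strict spread of the
pushforward distributions: τ^L ≠ τ'^L. -/
theorem stmt_11 {n m : ℕ}
    (L : (Fin n → ℝ) →ₗ[ℝ] (Fin m → ℝ))
    (K' K : ℕ) (w' : Fin K' → ℝ) (μ' : Fin K' → Fin n → ℝ)
    (w : Fin K → ℝ) (μ : Fin K → Fin n → ℝ)
    (hw'nn : ∀ i, 0 ≤ w' i) (hw'one : ∑ i, w' i = 1)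
    (Kk : Fin K' → Fin K → ℝ)
    (hKnn : ∀ i j, 0 ≤ Kk i j) (hKone : ∀ i, ∑ j, Kk i j = 1)
    (hbary : ∀ i, ∑ j, Kk i j • μ j = μ' i)
    (hmix : ∀ j, w j = ∑ i, w' i * Kk i j)
    (hinj : ∀ j j', 0 < w j → 0 < w j' → L (μ j) = L (μ j') → μ j = μ j')
    (hnondeg : ∃ i, 0 < w' i ∧
      (∑ j ∈ Finset.univ.filter (fun j => μ j = μ' i), Kk i j) < 1 ∧
      ∃ j j', 0 < Kk i j ∧ 0 < Kk i j' ∧ L (μ j) ≠ L (μ j')) :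
    (fun y => ∑ j ∈ Finset.univ.filter (fun j => L (μ j) = y), w j) ≠
    (fun y => ∑ i ∈ Finset.univ.filter (fun i => L (μ' i) = y), w' i) := by
  intro h
  obtain ⟨i₀, hi₀, -, j₀, j₀', hKj₀, hKj₀', hLne⟩ := hnondeg
  -- coordinate where the two images differ
  obtain ⟨k, hk⟩ := Function.ne_iff.mp hLne
  set x : Fin K → ℝ := fun j => L (μ j) k with hxdef
  set x' : Fin K' → ℝ := fun i => L (μ' i) k with hx'def
  -- barycenter at coordinate k
  have hx' : ∀ i, ∑ j, Kk i j * x j = x' i := by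
    intro i
    have h1 : L (∑ j, Kk i j • μ j) = L (μ' i) := congrArg L (hbary i)
    rw [map_sum] at h1
    have h2 := congrFun h1 k
    simpa [Finset.sum_apply, map_smul, smul_eq_mul] using h2
  -- equal pushforwards give equal second moments at coordinate k
  have hmom : ∑ j, w j * (x j) ^ 2 = ∑ i, w' i * (x' i) ^ 2 := by
    set S : Finset (Fin m → ℝ) :=
      (Finset.univ.image (fun j => L (μ j))) ∪ (Finset.univ.image (fun i => L (μ' i))) with hS
    have hS1 : ∀ j, L (μ j) ∈ S := fun j => by
      simp [hS, Finset.mem_union, Finset.mem_image]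
    have hS2 : ∀ i, L (μ' i) ∈ S := fun i => by
      simp [hS, Finset.mem_union, Finset.mem_image]
    have e1 := fiber_sum w (fun j => L (μ j)) S hS1 (fun y => (y k) ^ 2)
    have e2 := fiber_sum w' (fun i => L (μ' i)) S hS2 (fun y => (y k) ^ 2)
    rw [e1, e2]
    apply Finset.sum_congr rfl
    intro y _
    rw [congrFun h y]
  -- Jensen: strict inequality of second moments
  have hge : ∀ i, w' i * (x' i) ^ 2 ≤ w' i * ∑ j, Kk i j * (x j) ^ 2 := by
    intro i
    apply mul_le_mul_of_nonneg_left _ (hw'nn i)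
    have := gap_identity (Kk i) x (hKone i)
    rw [hx' i] at this
    have hnn : 0 ≤ ∑ j, Kk i j * (x j - x' i) ^ 2 :=
      Finset.sum_nonneg (fun j _ => mul_nonneg (hKnn i j) (sq_nonneg _))
    linarith
  have hstrict : w' i₀ * (x' i₀) ^ 2 < w' i₀ * ∑ j, Kk i₀ j * (x j) ^ 2 := by
    apply mul_lt_mul_of_pos_left _ hi₀
    have hid := gap_identity (Kk i₀) x (hKone i₀)
    rw [hx' i₀] at hid
    have hpos : 0 < ∑ j, Kk i₀ j * (x j - x' i₀) ^ 2 := by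
      set mm := x' i₀ with hmm
      have hne : x j₀ ≠ mm ∨ x j₀' ≠ mm := by
        by_contra hc
        push_neg at hc
        exact hk (hc.1.trans hc.2.symm)
      have key : ∀ j, 0 < Kk i₀ j → x j ≠ mm →
          0 < ∑ j, Kk i₀ j * (x j - mm) ^ 2 := by
        intro j hKj hxj
        apply Finset.sum_pos' (fun j _ => mul_nonneg (hKnn i₀ j) (sq_nonneg _))
        exact ⟨j, Finset.mem_univ j,
          mul_pos hKj (by have h0 := sub_ne_zero.mpr hxj; positivity)⟩
      rcases hne with hne | hne
      · exact key j₀ hKj₀ hne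
      · exact key j₀' hKj₀' hne
    linarith
  -- combine: ∑ w x² = ∑ w' (∑ Kk x²) > ∑ w' x'²
  have hswap : ∑ j, w j * (x j) ^ 2 = ∑ i, w' i * ∑ j, Kk i j * (x j) ^ 2 := by
    have : ∑ j, w j * (x j) ^ 2 = ∑ j, ∑ i, w' i * Kk i j * (x j) ^ 2 := by
      apply Finset.sum_congr rfl
      intro j _
      rw [hmix j, Finset.sum_mul]
    rw [this, Finset.sum_comm]
    apply Finset.sum_congr rfl
    intro i _
    rw [Finset.mul_sum]
    apply Finset.sum_congr rfl
    intro j _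
    ring
  have hlt : ∑ i, w' i * (x' i) ^ 2 < ∑ i, w' i * ∑ j, Kk i j * (x j) ^ 2 := by
    apply Finset.sum_lt_sum (fun i _ => hge i) ⟨i₀, Finset.mem_univ i₀, hstrict⟩
  rw [hmom, hswap] at * 
  linarith [hlt, hmom]
end

section
/- Let f : Θ → ℝ be a function on a finite set Θ, and let ν be a probability measure on Θ whose support intersects f⁻¹(y) for at least three distinct values y in f(Θ). Then there exist probability measures ν₁ ≠ ν₂ on Θ and λ ∈ (0,1) such that ν = λν₁ + (1−λ)ν₂ and E_{ν₁}[f] = E_{ν₂}[f] = E_ν[f]. -/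
/-!
Three points `θ₁, θ₂, θ₃` in the support of `ν` with distinct values `y₁, y₂, y₃` of `f` carry the
signed weights `g = (y₂ - y₃, y₃ - y₁, y₁ - y₂)`, which are nonzero and annihilate both `1` and `f`.
For `ε > 0` small enough `ν ± ε g` are still probability vectors; they have the same `f`-mean as
`ν`, they differ, and `ν` is their midpoint.
-/

open Finset Filter Topology

section

variable {Θ : Type*} [Fintype Θ]

theorem exists_ne_zero_sum_eq_zero_sum_mul_eq_zero (f : Θ → ℝ) {θ₁ θ₂ θ₃ : Θ}
    (h12 : f θ₁ ≠ f θ₂) (h13 : f θ₁ ≠ f θ₃) (h23 : f θ₂ ≠ f θ₃) :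
    ∃ g : Θ → ℝ, g ≠ 0 ∧ ∑ θ, g θ = 0 ∧ ∑ θ, f θ * g θ = 0 ∧
      ∀ θ, g θ ≠ 0 → θ = θ₁ ∨ θ = θ₂ ∨ θ = θ₃ := by
  classical
  let g : Θ → ℝ := Pi.single θ₁ (f θ₂ - f θ₃) + Pi.single θ₂ (f θ₃ - f θ₁) +
    Pi.single θ₃ (f θ₁ - f θ₂)
  have hθ12 : θ₁ ≠ θ₂ := fun h => h12 (congrArg f h)
  have hθ13 : θ₁ ≠ θ₃ := fun h => h13 (congrArg f h)
  refine ⟨g, fun hg => ?_, ?_, ?_, fun θ hθ => ?_⟩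
  · have hg₁ := congrFun hg θ₁
    simp [g, hθ12.symm, hθ13.symm] at hg₁
    exact h23 (sub_eq_zero.mp hg₁)
  · simp only [g, Pi.add_apply, sum_add_distrib, Finset.sum_pi_single', mem_univ, if_true]
    ring
  · simp only [g, Pi.add_apply, mul_add, sum_add_distrib, Pi.single_apply, mul_ite, mul_zero,
      sum_ite_eq', mem_univ, if_true]
    ring
  · by_contra! hout
    simp [g, hout.1, hout.2.1, hout.2.2] at hθ

theorem exists_pos_mul_abs_le {ν g : Θ → ℝ} (hν : ∀ θ, 0 ≤ ν θ)
    (hg : ∀ θ, g θ ≠ 0 → 0 < ν θ) : ∃ ε > 0, ∀ θ, ε * |g θ| ≤ ν θ := by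
  have hsmall : ∀ θ, ∀ᶠ ε in 𝓝[>] (0 : ℝ), ε * |g θ| ≤ ν θ := by
    intro θ
    by_cases h0 : g θ = 0
    · simp [h0, hν θ]
    · have hlim : Tendsto (fun ε : ℝ => ε * |g θ|) (𝓝[>] 0) (𝓝 0) := by
        simpa using (tendsto_nhdsWithin_of_tendsto_nhds
          ((continuous_id.mul continuous_const).tendsto (0 : ℝ)) :
            Tendsto (fun ε : ℝ => ε * |g θ|) (𝓝[>] 0) (𝓝 (0 * |g θ|)))
      exact hlim.eventually (ge_mem_nhds (hg θ h0))
  obtain ⟨ε, hε, hεν⟩ := ((eventually_all.2 hsmall).and self_mem_nhdsWithin).exists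
  exact ⟨ε, hεν, hε⟩

theorem sum_mul_add_mul_of_sum_mul_eq_zero {h g : Θ → ℝ} (hg : ∑ θ, h θ * g θ = 0)
    (ν : Θ → ℝ) (t : ℝ) : ∑ θ, h θ * (ν θ + t * g θ) = ∑ θ, h θ * ν θ := by
  simp only [mul_add, sum_add_distrib, mul_left_comm (h _) t, ← mul_sum, hg, mul_zero, add_zero]

theorem exists_midpoint_split_of_perturbation (f ν g : Θ → ℝ) (hνone : ∑ θ, ν θ = 1)
    (hg : g ≠ 0) (hg_sum : ∑ θ, g θ = 0) (hfg_sum : ∑ θ, f θ * g θ = 0)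
    {ε : ℝ} (hε : 0 < ε) (hεν : ∀ θ, ε * |g θ| ≤ ν θ) :
    ∃ (ν₁ ν₂ : Θ → ℝ) (lam : ℝ),
      ν₁ ≠ ν₂ ∧ 0 < lam ∧ lam < 1 ∧
      (∀ θ, 0 ≤ ν₁ θ) ∧ ∑ θ, ν₁ θ = 1 ∧
      (∀ θ, 0 ≤ ν₂ θ) ∧ ∑ θ, ν₂ θ = 1 ∧
      (∀ θ, ν θ = lam * ν₁ θ + (1 - lam) * ν₂ θ) ∧
      ∑ θ, f θ * ν₁ θ = ∑ θ, f θ * ν θ ∧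
      ∑ θ, f θ * ν₂ θ = ∑ θ, f θ * ν θ := by
  have hnonneg : ∀ t, |t| ≤ ε → ∀ θ, 0 ≤ ν θ + t * g θ := fun t ht θ =>
    calc 0 ≤ ν θ - ε * |g θ| := sub_nonneg.mpr (hεν θ)
      _ ≤ ν θ - |t * g θ| := by
        rw [abs_mul]; gcongr
      _ ≤ ν θ + t * g θ := by linarith [neg_abs_le (t * g θ)]
  have hmass : ∀ t, ∑ θ, (ν θ + t * g θ) = 1 := fun t => by
    simpa [hνone] using sum_mul_add_mul_of_sum_mul_eq_zero (h := 1) (by simpa using hg_sum) ν t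
  refine ⟨fun θ => ν θ + ε * g θ, fun θ => ν θ + -ε * g θ, 1 / 2, fun h => hg ?_,
    by norm_num, by norm_num, hnonneg ε (abs_of_pos hε).le, hmass ε,
    hnonneg (-ε) (by rw [abs_neg, abs_of_pos hε]), hmass (-ε), fun θ => by ring,
    sum_mul_add_mul_of_sum_mul_eq_zero hfg_sum ν ε,
    sum_mul_add_mul_of_sum_mul_eq_zero hfg_sum ν (-ε)⟩
  funext θ
  have h2εg : 2 * ε * g θ = 0 := by linarith [congrFun h θ]
  simpa [hε.ne'] using h2εg

end

/-- A posterior whose support meets at least three distinct f-level sets splits into two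
distinct posteriors with the same posterior mean of f. -/
theorem stmt_12 {Θ : Type*} [Fintype Θ] (f : Θ → ℝ) (ν : Θ → ℝ)
    (hνnn : ∀ θ, 0 ≤ ν θ) (hνone : ∑ θ, ν θ = 1)
    (y₁ y₂ y₃ : ℝ) (h12 : y₁ ≠ y₂) (h13 : y₁ ≠ y₃) (h23 : y₂ ≠ y₃)
    (h1 : ∃ θ, f θ = y₁ ∧ 0 < ν θ)
    (h2 : ∃ θ, f θ = y₂ ∧ 0 < ν θ)
    (h3 : ∃ θ, f θ = y₃ ∧ 0 < ν θ) :
    ∃ (ν₁ ν₂ : Θ → ℝ) (lam : ℝ),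
      ν₁ ≠ ν₂ ∧ 0 < lam ∧ lam < 1 ∧
      (∀ θ, 0 ≤ ν₁ θ) ∧ ∑ θ, ν₁ θ = 1 ∧
      (∀ θ, 0 ≤ ν₂ θ) ∧ ∑ θ, ν₂ θ = 1 ∧
      (∀ θ, ν θ = lam * ν₁ θ + (1 - lam) * ν₂ θ) ∧
      ∑ θ, f θ * ν₁ θ = ∑ θ, f θ * ν θ ∧
      ∑ θ, f θ * ν₂ θ = ∑ θ, f θ * ν θ := by
  obtain ⟨θ₁, rfl, hν₁⟩ := h1
  obtain ⟨θ₂, rfl, hν₂⟩ := h2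
  obtain ⟨θ₃, rfl, hν₃⟩ := h3
  obtain ⟨g, hg, hg_sum, hfg_sum, hg_supp⟩ :=
    exists_ne_zero_sum_eq_zero_sum_mul_eq_zero f h12 h13 h23
  have hg_pos : ∀ θ, g θ ≠ 0 → 0 < ν θ := fun θ hθ => by
    rcases hg_supp θ hθ with rfl | rfl | rfl <;> assumption
  obtain ⟨ε, hε, hεν⟩ := exists_pos_mul_abs_le hνnn hg_pos
  exact exists_midpoint_split_of_perturbation f ν g hνone hg hg_sum hfg_sum hε hεν
end

section
/- Let f : Θ → ℝ on a finite set Θ and let ν be a probability measure with ν(f⁻¹(y₁)) = α and ν(f⁻¹(y₂)) = 1−α for distinct y₁, y₂ and α ∈ (0,1), where supp(ν) ∩ f⁻¹(y₁) contains at least two points. Then ν can be written as a nontrivial mixture ν = ∫ ν_θ dP(θ) where P is the conditional of ν on f⁻¹(y₁), and for each θ ∈ supp(ν) ∩ f⁻¹(y₁), ν_θ = α δ_θ + (restriction of ν to f⁻¹(y₂)); each ν_θ satisfies E_{ν_θ}[f] = E_ν[f], and at least two of the ν_θ are distinct. -/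
/-!
Off the two level sets `ν` has no mass, so `ν` is `ν|_{f⁻¹(y₁)} + ν|_{f⁻¹(y₂)}`. Averaging
`ν_θ = α δ_θ + ν|_{f⁻¹(y₂)}` against the weights `ν θ / α` on `f⁻¹(y₁)` (which sum to `1`)
rebuilds the first summand and leaves the second untouched. Each `ν_θ` with `f θ = y₁` puts mass
`α` at value `y₁` and `1 - α` at value `y₂`, exactly as `ν` does, so all have the same `f`-mean;
and `ν_θ` has an atom of size `α` at `θ` that `ν_{θ'}` lacks for `θ' ≠ θ`.
-/

open Finset

section

variable {Θ : Type*}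

lemma eq_zero_of_sum_eq_sum_univ [Fintype Θ] {ν : Θ → ℝ} (hν : ∀ θ, 0 ≤ ν θ) {s : Finset Θ}
    (hs : ∑ θ ∈ s, ν θ = ∑ θ, ν θ) {θ : Θ} (hθ : θ ∉ s) : ν θ = 0 := by
  classical
  have hcompl : ∑ θ ∈ sᶜ, ν θ = 0 := by
    have := sum_compl_add_sum s ν
    linarith
  exact (sum_eq_zero_iff_of_nonneg fun i _ => hν i).1 hcompl θ (mem_compl.2 hθ)

section LevelSets

variable [Fintype Θ] (f : Θ → ℝ) {y₁ y₂ : ℝ}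

lemma sum_filter_eq_or_eq (hy : y₁ ≠ y₂) (g : Θ → ℝ) :
    ∑ θ ∈ univ.filter (fun θ => f θ = y₁ ∨ f θ = y₂), g θ =
      ∑ θ ∈ univ.filter (fun θ => f θ = y₁), g θ +
        ∑ θ ∈ univ.filter (fun θ => f θ = y₂), g θ := by
  classical
  rw [filter_or, sum_union (disjoint_filter.2 fun θ _ (h₁ : f θ = y₁) h₂ => hy (h₁ ▸ h₂))]

lemma sum_filter_eq_mul (y : ℝ) (g : Θ → ℝ) :
    ∑ θ ∈ univ.filter (fun θ => f θ = y), f θ * g θ =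
      y * ∑ θ ∈ univ.filter (fun θ => f θ = y), g θ := by
  rw [mul_sum]
  exact sum_congr rfl fun θ hθ => by rw [(mem_filter.1 hθ).2]

variable {f} {ν : Θ → ℝ} {α : ℝ}

lemma eq_zero_off_two_levels (hν : ∀ θ, 0 ≤ ν θ) (hνone : ∑ θ, ν θ = 1) (hy : y₁ ≠ y₂)
    (hm1 : ∑ θ ∈ univ.filter (fun θ => f θ = y₁), ν θ = α)
    (hm2 : ∑ θ ∈ univ.filter (fun θ => f θ = y₂), ν θ = 1 - α)
    {θ : Θ} (h₁ : f θ ≠ y₁) (h₂ : f θ ≠ y₂) : ν θ = 0 :=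
  eq_zero_of_sum_eq_sum_univ hν (by rw [sum_filter_eq_or_eq f hy, hm1, hm2, hνone]; ring)
    (by simp [h₁, h₂])

lemma sum_mul_eq_of_two_levels (hsupp : ∀ θ, f θ ≠ y₁ → f θ ≠ y₂ → ν θ = 0)
    (hy : y₁ ≠ y₂) (hm1 : ∑ θ ∈ univ.filter (fun θ => f θ = y₁), ν θ = α)
    (hm2 : ∑ θ ∈ univ.filter (fun θ => f θ = y₂), ν θ = 1 - α) :
    ∑ θ, f θ * ν θ = y₁ * α + y₂ * (1 - α) := by
  have hmass : ∀ θ ∈ univ, f θ * ν θ ≠ 0 → f θ = y₁ ∨ f θ = y₂ := fun θ _ hθ => by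
    by_contra h
    push Not at h
    exact hθ (by rw [hsupp θ h.1 h.2, mul_zero])
  rw [← sum_filter_of_ne hmass, sum_filter_eq_or_eq f hy, sum_filter_eq_mul, sum_filter_eq_mul,
    hm1, hm2]

end LevelSets

section SplitPosterior

variable [DecidableEq Θ]

noncomputable def splitPosterior (f ν : Θ → ℝ) (α y₂ : ℝ) (θ : Θ) : Θ → ℝ :=
  fun θ' => (if θ' = θ then α else 0) + (if f θ' = y₂ then ν θ' else 0)

variable {f ν : Θ → ℝ} {α y₂ : ℝ}

lemma splitPosterior_nonneg (hα : 0 ≤ α) (hν : ∀ θ, 0 ≤ ν θ) (θ θ' : Θ) :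
    0 ≤ splitPosterior f ν α y₂ θ θ' := by
  unfold splitPosterior
  have := hν θ'
  positivity

lemma splitPosterior_injective (hα : α ≠ 0) : Function.Injective (splitPosterior f ν α y₂) := by
  intro θ θ₀ h
  by_contra hne
  have hat := congrFun h θ
  simp only [splitPosterior, if_neg hne, add_left_inj] at hat
  exact hα hat

lemma sum_div_mul_splitPosterior {s : Finset Θ} (hα : α ≠ 0) (hs : ∑ θ ∈ s, ν θ = α) (θ' : Θ) :
    ∑ θ ∈ s, ν θ / α * splitPosterior f ν α y₂ θ θ' =
      (if θ' ∈ s then ν θ' else 0) + (if f θ' = y₂ then ν θ' else 0) := by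
  have hweights : ∑ θ ∈ s, ν θ / α = 1 := by rw [← sum_div, hs, div_self hα]
  simp only [splitPosterior, mul_add, sum_add_distrib]
  rw [← sum_mul, hweights, one_mul]
  simp only [mul_ite, mul_zero, div_mul_cancel₀ _ hα, sum_ite_eq]

variable [Fintype Θ]

lemma sum_splitPosterior (θ : Θ) :
    ∑ θ', splitPosterior f ν α y₂ θ θ' = α + ∑ θ' ∈ univ.filter (fun θ' => f θ' = y₂), ν θ' := by
  simp only [splitPosterior, sum_add_distrib, sum_ite_eq', mem_univ, if_true, sum_filter]

lemma sum_mul_splitPosterior (θ : Θ) :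
    ∑ θ', f θ' * splitPosterior f ν α y₂ θ θ' =
      f θ * α + y₂ * ∑ θ' ∈ univ.filter (fun θ' => f θ' = y₂), ν θ' := by
  simp only [splitPosterior, mul_add, sum_add_distrib, mul_ite, mul_zero, sum_ite_eq', mem_univ,
    if_true, ← sum_filter, sum_filter_eq_mul]

end SplitPosterior

end

open scoped Classical in
theorem stmt_14_general {Θ : Type*} [Fintype Θ] [DecidableEq Θ] (f : Θ → ℝ)
    (ν : Θ → ℝ) (hνnn : ∀ θ, 0 ≤ ν θ) (hνone : ∑ θ, ν θ = 1)
    (y₁ y₂ : ℝ) (hy : y₁ ≠ y₂) (α : ℝ) (hα0 : 0 < α)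
    (hm1 : ∑ θ ∈ Finset.univ.filter (fun θ => f θ = y₁), ν θ = α)
    (hm2 : ∑ θ ∈ Finset.univ.filter (fun θ => f θ = y₂), ν θ = 1 - α)
    (θa θb : Θ) (hab : θa ≠ θb)
    (νθ : Θ → Θ → ℝ)
    (hνθ : ∀ θ θ', νθ θ θ' =
      (if θ' = θ then α else 0) + (if f θ' = y₂ then ν θ' else 0)) :
    (∀ θ', ν θ' = ∑ θ ∈ Finset.univ.filter (fun θ => f θ = y₁), (ν θ / α) * νθ θ θ') ∧
    (∀ θ, f θ = y₁ →
      (∀ θ', 0 ≤ νθ θ θ') ∧ ∑ θ', νθ θ θ' = 1 ∧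
      ∑ θ', f θ' * νθ θ θ' = ∑ θ', f θ' * ν θ') ∧
    νθ θa ≠ νθ θb := by
  obtain rfl : νθ = splitPosterior f ν α y₂ := funext fun θ => funext (hνθ θ)
  have hsupp : ∀ θ, f θ ≠ y₁ → f θ ≠ y₂ → ν θ = 0 := fun _ =>
    eq_zero_off_two_levels hνnn hνone hy hm1 hm2
  refine ⟨fun θ' => ?_, fun θ hθ => ⟨splitPosterior_nonneg hα0.le hνnn θ, ?_, ?_⟩,
    (splitPosterior_injective hα0.ne').ne hab⟩
  · rw [sum_div_mul_splitPosterior hα0.ne' hm1]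
    by_cases h₁ : f θ' = y₁
    · simp [h₁, hy]
    by_cases h₂ : f θ' = y₂
    · simp [h₂, hy.symm]
    · simp [h₁, h₂, hsupp θ' h₁ h₂]
  · rw [sum_splitPosterior, hm2]
    ring
  · rw [sum_mul_splitPosterior, hm2, sum_mul_eq_of_two_levels hsupp hy hm1 hm2, hθ]

open scoped Classical in
/-- A posterior putting mass α on a non-singleton part of the level set f⁻¹(y₁) (and 1-α on
f⁻¹(y₂)) is a nontrivial mixture of the posteriors ν_θ = α δ_θ + ν|_{f⁻¹(y₂)}, each having
the same posterior mean of f, with at least two of them distinct. -/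
theorem stmt_14 {Θ : Type*} [Fintype Θ] [DecidableEq Θ] (f : Θ → ℝ)
    (ν : Θ → ℝ) (hνnn : ∀ θ, 0 ≤ ν θ) (hνone : ∑ θ, ν θ = 1)
    (y₁ y₂ : ℝ) (hy : y₁ ≠ y₂) (α : ℝ) (hα0 : 0 < α) (hα1 : α < 1)
    (hm1 : ∑ θ ∈ Finset.univ.filter (fun θ => f θ = y₁), ν θ = α)
    (hm2 : ∑ θ ∈ Finset.univ.filter (fun θ => f θ = y₂), ν θ = 1 - α)
    (θa θb : Θ) (hab : θa ≠ θb) (hfa : f θa = y₁) (hfb : f θb = y₁)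
    (hνa : 0 < ν θa) (hνb : 0 < ν θb)
    (νθ : Θ → Θ → ℝ)
    (hνθ : ∀ θ θ', νθ θ θ' =
      (if θ' = θ then α else 0) + (if f θ' = y₂ then ν θ' else 0)) :
    (∀ θ', ν θ' = ∑ θ ∈ Finset.univ.filter (fun θ => f θ = y₁), (ν θ / α) * νθ θ θ') ∧
    (∀ θ, f θ = y₁ →
      (∀ θ', 0 ≤ νθ θ θ') ∧ ∑ θ', νθ θ θ' = 1 ∧
      ∑ θ', f θ' * νθ θ θ' = ∑ θ', f θ' * ν θ') ∧
    νθ θa ≠ νθ θb :=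
  stmt_14_general f ν hνnn hνone y₁ y₂ hy α hα0 hm1 hm2 θa θb hab νθ hνθ
end

section
/- Let τ and τ' be finitely supported Bayes-plausible distributions over posteriors on a finite set Ω with common prior μ₀ (i.e., barycenter μ₀). If τ is a mean-preserving spread of τ' and τ' is a mean-preserving spread of τ, and additionally every atom of τ and τ' is an extreme point of conv(supp(τ) ∪ supp(τ')), then τ = τ'. More simply: if τ ⪰ τ' via kernel K and τ' ⪰ τ via kernel K', and supp(τ) consists of points that are extreme in conv(supp(τ')), then τ = τ'. -/
/-!
Every atom `μ j` of `τ` is the barycenter of the row `K2 j`, a convex combination of atoms of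
`τ'`. Since `μ j` is extreme, that row charges only atoms equal to `μ j`, so `K2` moves mass only
within the fibres of the posterior map, and `w' = w K2` gives every posterior the same mass as `w`.
-/

open Finset

section
variable {𝕜 E ι : Type*} [Field 𝕜] [LinearOrder 𝕜] [IsStrictOrderedRing 𝕜] [AddCommGroup E]
  [Module 𝕜 E]

theorem Convex.eq_of_sum_smul_mem_extremePoints {A : Set E} (hA : Convex 𝕜 A) {s : Finset ι}
    {t : ι → 𝕜} {x : ι → E} {e : E} (he : e ∈ A.extremePoints 𝕜) (ht₀ : ∀ i ∈ s, 0 ≤ t i)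
    (ht₁ : ∑ i ∈ s, t i = 1) (hx : ∀ i ∈ s, x i ∈ A) (hsum : ∑ i ∈ s, t i • x i = e)
    {i : ι} (hi : i ∈ s) (hti : 0 < t i) : x i = e := by
  classical
  set S := s.filter (fun i => x i ≠ e)
  have hS : ∑ i ∈ S, t i • x i = (∑ i ∈ S, t i) • e := by
    rw [← sub_eq_zero, sum_smul, ← sum_sub_distrib]
    simp_rw [← smul_sub]
    rw [sum_filter_of_ne fun i _ h => by contrapose! h; simp [h]]
    simp [smul_sub, sum_sub_distrib, ← sum_smul, ht₁, hsum]
  by_contra hne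
  have hT : 0 < ∑ i ∈ S, t i :=
    sum_pos' (fun i hi => ht₀ i (mem_filter.1 hi).1) ⟨i, mem_filter.2 ⟨hi, hne⟩, hti⟩
  -- `A \ {e}` is convex because `e` is extreme, yet it contains the barycenter of `S`, which is `e`.
  have hmem : S.centerMass t x ∈ A \ {e} :=
    (hA.mem_extremePoints_iff_convex_sdiff.1 he).2.centerMass_mem
      (fun i hi => ht₀ i (mem_filter.1 hi).1) hT
      (fun i hi => ⟨hx i (mem_filter.1 hi).1, (mem_filter.1 hi).2⟩)
  have hcm : S.centerMass t x = e := by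
    rw [centerMass, hS, smul_smul, inv_mul_cancel₀ hT.ne', one_smul]
  exact hmem.2 hcm
end

theorem Finset.sum_filter_eq_ite_of_support_subset_fiber {ι α 𝕜 : Type*} [Semiring 𝕜]
    [DecidableEq α] {s : Finset ι} {p : ι → 𝕜} (hp : ∑ i ∈ s, p i = 1) {f : ι → α} {a : α}
    (hf : ∀ i ∈ s, p i ≠ 0 → f i = a) (b : α) :
    ∑ i ∈ s with f i = b, p i = if a = b then 1 else 0 := by
  rw [sum_filter]
  split_ifs
  · rw [← hp]
    refine sum_congr rfl fun i _ => ?_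
    by_cases h : p i = 0 <;> simp_all
  · refine sum_eq_zero fun i _ => ?_
    by_cases h : p i = 0 <;> simp_all

open scoped Classical in
theorem stmt_15_general {Ω : Type*} [Fintype Ω]
    (K K' : ℕ) (w : Fin K → ℝ) (μ : Fin K → Ω → ℝ)
    (w' : Fin K' → ℝ) (μ' : Fin K' → Ω → ℝ)
    (K2 : Fin K → Fin K' → ℝ)
    (hK2nn : ∀ j i, 0 ≤ K2 j i) (hK2one : ∀ j, ∑ i, K2 j i = 1)
    (hK2bary : ∀ j, ∑ i, K2 j i • μ' i = μ j)
    (hK2mix : ∀ i, w' i = ∑ j, w j * K2 j i)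
    (hext : ∀ j, μ j ∈ Set.extremePoints ℝ (convexHull ℝ (Set.range μ'))) :
    ∀ x : Ω → ℝ,
      (∑ j ∈ Finset.univ.filter (fun j => μ j = x), w j) =
      (∑ i ∈ Finset.univ.filter (fun i => μ' i = x), w' i) := by
  intro x
  have hrow : ∀ j, ∑ i with μ' i = x, K2 j i = if μ j = x then 1 else 0 := fun j =>
    sum_filter_eq_ite_of_support_subset_fiber (hK2one j) (fun i _ hi =>
      (convex_convexHull ℝ _).eq_of_sum_smul_mem_extremePoints (hext j)
        (fun i _ => hK2nn j i) (hK2one j) (fun i _ => subset_convexHull ℝ _ ⟨i, rfl⟩)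
        (hK2bary j) (mem_univ i) ((hK2nn j i).lt_of_ne' hi)) x
  calc ∑ j with μ j = x, w j = ∑ j, w j * if μ j = x then 1 else 0 := by
        simp only [sum_filter, mul_ite, mul_one, mul_zero]
    _ = ∑ j, w j * ∑ i with μ' i = x, K2 j i := by simp only [hrow]
    _ = ∑ i with μ' i = x, w' i := by simp only [hK2mix, mul_sum]; exact sum_comm

open scoped Classical in
/-- Antisymmetry of the Blackwell order modulo equivalence: if τ and τ' are mutual
mean-preserving spreads of each other with common barycenter μ₀, and every atom of τ is an
extreme point of the convex hull of the support of τ', then τ = τ' as distributions. -/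
theorem stmt_15 {Ω : Type*} [Fintype Ω]
    (μ₀ : Ω → ℝ)
    (K K' : ℕ) (w : Fin K → ℝ) (μ : Fin K → Ω → ℝ)
    (w' : Fin K' → ℝ) (μ' : Fin K' → Ω → ℝ)
    (hwpos : ∀ j, 0 < w j) (hwone : ∑ j, w j = 1)
    (hw'pos : ∀ i, 0 < w' i) (hw'one : ∑ i, w' i = 1)
    (hbary : ∑ j, w j • μ j = μ₀) (hbary' : ∑ i, w' i • μ' i = μ₀)
    (K1 : Fin K' → Fin K → ℝ)
    (hK1nn : ∀ i j, 0 ≤ K1 i j) (hK1one : ∀ i, ∑ j, K1 i j = 1)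
    (hK1bary : ∀ i, ∑ j, K1 i j • μ j = μ' i)
    (hK1mix : ∀ j, w j = ∑ i, w' i * K1 i j)
    (K2 : Fin K → Fin K' → ℝ)
    (hK2nn : ∀ j i, 0 ≤ K2 j i) (hK2one : ∀ j, ∑ i, K2 j i = 1)
    (hK2bary : ∀ j, ∑ i, K2 j i • μ' i = μ j)
    (hK2mix : ∀ i, w' i = ∑ j, w j * K2 j i)
    (hext : ∀ j, μ j ∈ Set.extremePoints ℝ (convexHull ℝ (Set.range μ'))) :
    ∀ x : Ω → ℝ,
      (∑ j ∈ Finset.univ.filter (fun j => μ j = x), w j) =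
      (∑ i ∈ Finset.univ.filter (fun i => μ' i = x), w' i) :=
  stmt_15_general K K' w μ w' μ' K2 hK2nn hK2one hK2bary hK2mix hext
end
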